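/- (F₄ sequence.) On ℝ⁶ = ℝ⁵ × ℝ (d = 5 scale factors, one dilaton φ) consider the six wall forms w_{−1} = e₅ − e₄, w₀ = e₄ − e₃, w₁ = e₃ − e₂, w₂ = e₂ − e₁, w₃ = e₁ − (1/2)φ, w₄ = φ. Then (w_i|w_i) = 2 for i = −1, 0, 1, 2 and (w₃|w₃) = (w₄|w₄) = 1, and the Cartan matrix A_{ij} = 2(w_i|w_j)/(w_i|w_i) equals the 6×6 matrix with rows (2,−1,0,0,0,0), (−1,2,−1,0,0,0), (0,−1,2,−1,0,0), (0,0,−1,2,−1,0), (0,0,0,−2,2,−1), (0,0,0,0,−1,2) in the ordering (w_{−1}, w₀, w₁, w₂, w₃, w₄). This is the generalized Cartan matrix of the hyperbolic overextension F₄^∧∧. -/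

import Mathlib

/-- The wall scalar product on `ℝ⁵ × ℝ` (`d = 5` scale factors, one dilaton):
`(w|w') = Σᵢ wᵢw'ᵢ − (1/4)(Σᵢ wᵢ)(Σᵢ w'ᵢ) + w̃ w̃'`. -/
noncomputable def wallIPF (w w' : (Fin 5 → ℝ) × ℝ) : ℝ :=
  (∑ i, w.1 i * w'.1 i) - (1 / 4) * (∑ i, w.1 i) * (∑ i, w'.1 i) + w.2 * w'.2

/-!
On differences `e_a - e_b` of scale-factor forms the trace term `-(1/4)(Σ wᵢ)(Σ w'ᵢ)` of the wall
scalar product vanishes, so `w_{-1}, …, w₂` form an `A₄` chain of roots of length `2`. The trace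
term only enters through `w₃ = e₁ - φ/2`, where it exactly compensates the dilaton part:
`(w₃|w₃) = 1 - 1/4 + 1/4 = 1`, `(w₃|w₄) = -1/2`. Dividing row `i` of the resulting Gram matrix
by `(w_i|w_i)/2` gives the Cartan matrix.
-/

-- Index `k : Fin 6` is the paper's `w_{k-1}`, coordinate `l : Fin 5` is `e_{l+1}`.
noncomputable def f4Walls : Fin 6 → (Fin 5 → ℝ) × ℝ :=
  ![(![0, 0, 0, -1, 1], 0), (![0, 0, -1, 1, 0], 0), (![0, -1, 1, 0, 0], 0),
    (![-1, 1, 0, 0, 0], 0), (![1, 0, 0, 0, 0], -(1 / 2)), (0, 1)]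

noncomputable def f4Gram : Matrix (Fin 6) (Fin 6) ℝ :=
  !![2, -1, 0, 0, 0, 0;
    -1, 2, -1, 0, 0, 0;
    0, -1, 2, -1, 0, 0;
    0, 0, -1, 2, -1, 0;
    0, 0, 0, -1, 1, -1 / 2;
    0, 0, 0, 0, -1 / 2, 1]

def f4OverextendedCartan : Matrix (Fin 6) (Fin 6) ℝ :=
  !![2, -1, 0, 0, 0, 0;
    -1, 2, -1, 0, 0, 0;
    0, -1, 2, -1, 0, 0;
    0, 0, -1, 2, -1, 0;
    0, 0, 0, -2, 2, -1;
    0, 0, 0, 0, -1, 2]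

theorem eq_f4Walls {w : Fin 6 → (Fin 5 → ℝ) × ℝ}
    (hw0 : w 0 = (fun l => (if l.val = 4 then (1 : ℝ) else 0)
      - (if l.val = 3 then 1 else 0), 0))
    (hw1 : w 1 = (fun l => (if l.val = 3 then (1 : ℝ) else 0)
      - (if l.val = 2 then 1 else 0), 0))
    (hw2 : w 2 = (fun l => (if l.val = 2 then (1 : ℝ) else 0)
      - (if l.val = 1 then 1 else 0), 0))
    (hw3 : w 3 = (fun l => (if l.val = 1 then (1 : ℝ) else 0)
      - (if l.val = 0 then 1 else 0), 0))
    (hw4 : w 4 = (fun l => if l.val = 0 then (1 : ℝ) else 0, -(1 / 2)))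
    (hw5 : w 5 = (fun _ => 0, 1)) :
    w = f4Walls := by
  funext i
  fin_cases i <;> refine Prod.ext (funext fun l => ?_) ?_ <;> try fin_cases l
  all_goals simp [hw0, hw1, hw2, hw3, hw4, hw5, f4Walls]

theorem wallIPF_f4Walls (i j : Fin 6) : wallIPF (f4Walls i) (f4Walls j) = f4Gram i j := by
  fin_cases i <;> fin_cases j <;> norm_num [wallIPF, Fin.sum_univ_succ, f4Walls, f4Gram]

theorem two_mul_f4Gram_div_diag (i j : Fin 6) :
    2 * f4Gram i j / f4Gram i i = f4OverextendedCartan i j := by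
  fin_cases i <;> fin_cases j <;> norm_num [f4Gram, f4OverextendedCartan]

/-- (F₄ sequence.) On `ℝ⁵ × ℝ` the six dominant wall forms `w_{−1} = e₅ − e₄`,
`w₀ = e₄ − e₃`, `w₁ = e₃ − e₂`, `w₂ = e₂ − e₁`, `w₃ = e₁ − (1/2)φ`, `w₄ = φ` have
squared norms `2, 2, 2, 2, 1, 1`, and their Cartan matrix
`A_{ij} = 2(w_i|w_j)/(w_i|w_i)` equals the generalized Cartan matrix of the hyperbolic
overextension `F₄^∧∧` with rows `(2,−1,0,0,0,0), (−1,2,−1,0,0,0), (0,−1,2,−1,0,0),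
(0,0,−1,2,−1,0), (0,0,0,−2,2,−1), (0,0,0,0,−1,2)`. -/
theorem F4_billiard (w : Fin 6 → (Fin 5 → ℝ) × ℝ)
    (hw0 : w 0 = (fun l => (if l.val = 4 then (1 : ℝ) else 0)
      - (if l.val = 3 then 1 else 0), 0))
    (hw1 : w 1 = (fun l => (if l.val = 3 then (1 : ℝ) else 0)
      - (if l.val = 2 then 1 else 0), 0))
    (hw2 : w 2 = (fun l => (if l.val = 2 then (1 : ℝ) else 0)
      - (if l.val = 1 then 1 else 0), 0))
    (hw3 : w 3 = (fun l => (if l.val = 1 then (1 : ℝ) else 0)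
      - (if l.val = 0 then 1 else 0), 0))
    (hw4 : w 4 = (fun l => if l.val = 0 then (1 : ℝ) else 0, -(1 / 2)))
    (hw5 : w 5 = (fun _ => 0, 1))
    (A : Fin 6 → Fin 6 → ℝ)
    (hA : ∀ i j, A i j = 2 * wallIPF (w i) (w j) / wallIPF (w i) (w i)) :
    wallIPF (w 0) (w 0) = 2 ∧ wallIPF (w 1) (w 1) = 2 ∧
    wallIPF (w 2) (w 2) = 2 ∧ wallIPF (w 3) (w 3) = 2 ∧
    wallIPF (w 4) (w 4) = 1 ∧ wallIPF (w 5) (w 5) = 1 ∧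
    (∀ i j, A i j =
      (!![2, -1, 0, 0, 0, 0;
          -1, 2, -1, 0, 0, 0;
          0, -1, 2, -1, 0, 0;
          0, 0, -1, 2, -1, 0;
          0, 0, 0, -2, 2, -1;
          0, 0, 0, 0, -1, 2] : Matrix (Fin 6) (Fin 6) ℝ) i j) := by
  obtain rfl : w = f4Walls := eq_f4Walls hw0 hw1 hw2 hw3 hw4 hw5
  simp only [hA, wallIPF_f4Walls, two_mul_f4Gram_div_diag]
  exact ⟨rfl, rfl, rfl, rfl, rfl, rfl, fun i j => rfl⟩
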